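/- In the hyperreals, if ω is an infinite positive hyperreal, then ω^(1/ω) − 1 is a positive infinitesimal, i.e., 0 < ω^(1/ω) − 1 < c for every standard positive real c. -/

import Mathlib

open Filter

/-- The hyperreal extension of the real exponential function. -/
noncomputable def Hyperreal.exp : Hyperreal → Hyperreal := Germ.map Real.exp

/-- The hyperreal extension of the real logarithm. -/
noncomputable def Hyperreal.log : Hyperreal → Hyperreal := Germ.map Real.log

/-!
On the real line `x ↦ exp (log x / x)` exceeds `1` for `x > 1` and tends to `1` as `x → ∞`.
Both facts transfer to the hyperreal germ: an infinite `ω` is represented by a sequence tending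
to `∞` along the ultrafilter, so every eventual property at `atTop` holds along it.
-/

open Topology

theorem Filter.Germ.Tendsto.map {α β γ : Type*} {l : Filter α} {lb : Filter β} {lc : Filter γ}
    {x : Germ l β} {g : β → γ} (hx : x.Tendsto lb) (hg : Tendsto g lb lc) :
    (x.map g).Tendsto lc := by
  induction x using Germ.inductionOn
  exact hg.comp hx

namespace Real

theorem one_lt_exp_log_div_self {x : ℝ} (hx : 1 < x) : 1 < exp (log x / x) :=
  one_lt_exp_iff.2 (div_pos (log_pos hx) (zero_lt_one.trans hx))

theorem tendsto_exp_log_div_self_atTop :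
    Tendsto (fun x : ℝ => exp (log x / x)) atTop (𝓝 1) := by
  have h := (continuous_exp.tendsto 0).comp isLittleO_log_id_atTop.tendsto_div_nhds_zero
  rwa [exp_zero] at h

end Real

namespace Hyperreal

theorem tendsto_atTop_of_forall_natCast_lt {x : ℝ*} (hx : ∀ n : ℕ, (n : ℝ*) < x) :
    x.Tendsto atTop := by
  obtain ⟨f, rfl⟩ := ofSeq_surjective x
  refine tendsto_atTop.2 fun r => ?_
  obtain ⟨n, hn⟩ := exists_nat_ge r
  have hnf : ofSeq (fun _ => (n : ℝ)) < ofSeq f := hx n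
  filter_upwards [ofSeq_lt_ofSeq.1 hnf] with k hk
  exact hn.trans hk.le

theorem coe_lt_map_of_eventually {x : ℝ*} {l : Filter ℝ} {g : ℝ → ℝ} {c : ℝ}
    (hx : x.Tendsto l) (hg : ∀ᶠ t in l, c < g t) : (c : ℝ*) < x.map g := by
  obtain ⟨f, rfl⟩ := ofSeq_surjective x
  rw [tendsto_ofSeq] at hx
  exact ofSeq_lt_ofSeq.2 (hx.eventually hg)

theorem exp_log_div_self_eq_map (x : ℝ*) :
    exp (log x / x) = x.map fun t => Real.exp (Real.log t / t) := by
  induction x using Germ.inductionOn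
  rfl

end Hyperreal

theorem grossone_pow_inv_grossone_sub_one_infinitesimal (ω : Hyperreal)
    (hω : ∀ n : ℕ, (n : Hyperreal) < ω) :
    0 < Hyperreal.exp (Hyperreal.log ω / ω) - 1 ∧
      ∀ c : ℝ, 0 < c →
        Hyperreal.exp (Hyperreal.log ω / ω) - 1 < (c : Hyperreal) := by
  have hω_top := Hyperreal.tendsto_atTop_of_forall_natCast_lt hω
  have h_one_lt : 1 < Hyperreal.exp (Hyperreal.log ω / ω) := by
    rw [Hyperreal.exp_log_div_self_eq_map, ← Hyperreal.coe_one]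
    exact Hyperreal.coe_lt_map_of_eventually hω_top
      ((eventually_gt_atTop 1).mono fun _ => Real.one_lt_exp_log_div_self)
  have h_tendsto : (Hyperreal.exp (Hyperreal.log ω / ω)).Tendsto (𝓝 1) := by
    rw [Hyperreal.exp_log_div_self_eq_map]
    exact hω_top.map Real.tendsto_exp_log_div_self_atTop
  refine ⟨sub_pos.2 h_one_lt, fun c hc => ?_⟩
  have h_le := (Hyperreal.tendsto_iff_forall.1 h_tendsto).2 (1 + c / 2) (by linarith)
  have h_lt : ((1 + c / 2 : ℝ) : ℝ*) < 1 + c := by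
    rw [← Hyperreal.coe_one, ← Hyperreal.coe_add, Hyperreal.coe_lt_coe]
    linarith
  exact sub_lt_iff_lt_add'.2 (h_le.trans_lt h_lt)
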